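/- Let (E, d, ∧) be a rooftop metric space in which every increasing Cauchy sequence and every decreasing Cauchy sequence converges. Let (x_k) be a sequence with d(x_k, x_{k+1}) ≤ 2^{-k}. Define y^k := lim_{j→∞} (x_k ∧ ⋯ ∧ x_{k+j}) (which exists as a decreasing Cauchy limit). Then d(y^k, y^{k+1}) ≤ 2^{-k}, so (y^k) is a Cauchy sequence, and moreover d(y^k, x_k) ≤ 2^{1−k}; consequently (x_k) converges (to y = lim y^k). -/
import Mathlib


structure Rooftop (E : Type*) [MetricSpace E] where
  wedge : E → E → E
  comm : ∀ x y, wedge x y = wedge y x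
  assoc : ∀ x y z, wedge (wedge x y) z = wedge x (wedge y z)
  idem : ∀ x, wedge x x = x
  dist_wedge_le : ∀ x y z, dist (wedge x z) (wedge y z) ≤ dist x y

/-- `iterWedge w x k j = x k ∧ x (k+1) ∧ ⋯ ∧ x (k+j)`. -/
def iterWedge {E : Type*} (w : E → E → E) (x : ℕ → E) (k : ℕ) : ℕ → E
  | 0 => x k
  | j + 1 => w (iterWedge w x k j) (x (k + j + 1))

namespace RooftopAux

variable {E : Type*} [MetricSpace E] (R : Rooftop E) (x : ℕ → E)

lemma absorb_last (k j : ℕ) :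
    R.wedge (iterWedge R.wedge x k j) (x (k + j)) = iterWedge R.wedge x k j := by
  cases j with
  | zero => exact R.idem _
  | succ j =>
      simp only [iterWedge, R.assoc]
      rw [show k + (j + 1) = k + j + 1 by omega, R.idem]

lemma absorb_first (k j : ℕ) :
    R.wedge (x k) (iterWedge R.wedge x k j) = iterWedge R.wedge x k j := by
  induction j with
  | zero => exact R.idem _
  | succ j ih => simp only [iterWedge, ← R.assoc, ih]

lemma shift (k j : ℕ) :
    iterWedge R.wedge x k (j + 1) = R.wedge (x k) (iterWedge R.wedge x (k + 1) j) := by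
  induction j with
  | zero => rfl
  | succ j ih =>
      show R.wedge (iterWedge R.wedge x k (j + 1)) (x (k + (j + 1) + 1)) = _
      rw [ih, R.assoc]
      have : k + (j + 1) + 1 = (k + 1) + j + 1 := by omega
      rw [this]
      rfl

lemma decreasing (k j : ℕ) :
    R.wedge (iterWedge R.wedge x k (j + 1)) (iterWedge R.wedge x k j)
      = iterWedge R.wedge x k (j + 1) := by
  show R.wedge (R.wedge (iterWedge R.wedge x k j) (x (k + j + 1))) _ = _
  rw [R.comm (iterWedge R.wedge x k j) (x (k + j + 1)), R.assoc, R.idem]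
  exact R.comm _ _

lemma dist_wedge_le' (a b c d : E) :
    dist (R.wedge a c) (R.wedge b d) ≤ dist a b + dist c d := by
  calc dist (R.wedge a c) (R.wedge b d)
      ≤ dist (R.wedge a c) (R.wedge b c) + dist (R.wedge b c) (R.wedge b d) := dist_triangle _ _ _
    _ ≤ dist a b + dist c d := by
        gcongr
        · exact R.dist_wedge_le a b c
        · rw [R.comm b c, R.comm b d]; exact R.dist_wedge_le c d b

lemma wedge_tendsto {a b : ℕ → E} {la lb : E}
    (ha : Filter.Tendsto a Filter.atTop (nhds la))
    (hb : Filter.Tendsto b Filter.atTop (nhds lb)) :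
    Filter.Tendsto (fun j => R.wedge (a j) (b j)) Filter.atTop (nhds (R.wedge la lb)) := by
  rw [tendsto_iff_dist_tendsto_zero]
  apply squeeze_zero (fun j => dist_nonneg)
    (fun j => dist_wedge_le' R (a j) la (b j) lb)
  have := (tendsto_iff_dist_tendsto_zero.mp ha).add (tendsto_iff_dist_tendsto_zero.mp hb)
  simpa using this

variable (hd : ∀ k, dist (x k) (x (k + 1)) ≤ (2 : ℝ)⁻¹ ^ k)
include hd

lemma dist_step (k j : ℕ) :
    dist (iterWedge R.wedge x k j) (iterWedge R.wedge x k (j + 1))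
      ≤ (2 : ℝ)⁻¹ ^ k * (2 : ℝ)⁻¹ ^ j := by
  have h1 : iterWedge R.wedge x k j = R.wedge (x (k + j)) (iterWedge R.wedge x k j) := by
    rw [R.comm, absorb_last]
  have h2 : iterWedge R.wedge x k (j + 1)
      = R.wedge (x (k + j + 1)) (iterWedge R.wedge x k j) := by
    show R.wedge (iterWedge R.wedge x k j) (x (k + j + 1)) = _
    rw [R.comm]
  rw [h2]
  nth_rewrite 1 [h1]
  calc dist (R.wedge (x (k + j)) (iterWedge R.wedge x k j))
        (R.wedge (x (k + j + 1)) (iterWedge R.wedge x k j))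
      ≤ dist (x (k + j)) (x (k + j + 1)) := R.dist_wedge_le _ _ _
    _ ≤ (2 : ℝ)⁻¹ ^ (k + j) := hd (k + j)
    _ = (2 : ℝ)⁻¹ ^ k * (2 : ℝ)⁻¹ ^ j := pow_add _ _ _

lemma cauchy_iter (k : ℕ) : CauchySeq (fun j => iterWedge R.wedge x k j) :=
  cauchySeq_of_le_geometric (2 : ℝ)⁻¹ ((2 : ℝ)⁻¹ ^ k) (by norm_num)
    (fun j => dist_step R x hd k j)

lemma dist_head' (k j : ℕ) :
    dist (x k) (iterWedge R.wedge x k j) ≤ (2 : ℝ)⁻¹ ^ k * (2 - 2 * (2 : ℝ)⁻¹ ^ j) := by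
  induction j with
  | zero => simp [iterWedge]
  | succ j ih =>
      calc dist (x k) (iterWedge R.wedge x k (j + 1))
          ≤ dist (x k) (iterWedge R.wedge x k j)
            + dist (iterWedge R.wedge x k j) (iterWedge R.wedge x k (j + 1)) :=
            dist_triangle _ _ _
        _ ≤ (2 : ℝ)⁻¹ ^ k * (2 - 2 * (2 : ℝ)⁻¹ ^ j) + (2 : ℝ)⁻¹ ^ k * (2 : ℝ)⁻¹ ^ j :=
            add_le_add ih (dist_step R x hd k j)
        _ = (2 : ℝ)⁻¹ ^ k * (2 - 2 * (2 : ℝ)⁻¹ ^ (j + 1)) := by ring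

lemma dist_head (k j : ℕ) :
    dist (x k) (iterWedge R.wedge x k j) ≤ 2 * (2 : ℝ)⁻¹ ^ k := by
  refine (dist_head' R x hd k j).trans ?_
  have h1 := pow_nonneg (by norm_num : (0:ℝ) ≤ 2⁻¹) j
  have h2 := pow_nonneg (by norm_num : (0:ℝ) ≤ 2⁻¹) k
  nlinarith

end RooftopAux

open Filter

/-- In a rooftop metric space where increasing and decreasing Cauchy sequences converge,
if `d(x_k, x_{k+1}) ≤ 2^{-k}`, then the limits `y^k = lim_j (x_k ∧ ⋯ ∧ x_{k+j})` exist,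
satisfy `d(y^k, y^{k+1}) ≤ 2^{-k}` (so `(y^k)` is Cauchy) and `d(y^k, x_k) ≤ 2^{1-k}`,
and consequently `(x_k)` converges. -/
theorem rooftop_cauchy_converges {E : Type*} [MetricSpace E] (R : Rooftop E)
    (hinc : ∀ x : ℕ → E, CauchySeq x → (∀ n, R.wedge (x n) (x (n + 1)) = x n) →
      ∃ l, Filter.Tendsto x Filter.atTop (nhds l))
    (hdec : ∀ x : ℕ → E, CauchySeq x → (∀ n, R.wedge (x (n + 1)) (x n) = x (n + 1)) →
      ∃ l, Filter.Tendsto x Filter.atTop (nhds l))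
    (x : ℕ → E) (hd : ∀ k, dist (x k) (x (k + 1)) ≤ (2 : ℝ)⁻¹ ^ k) :
    ∃ y : ℕ → E,
      (∀ k, Filter.Tendsto (fun j => iterWedge R.wedge x k j) Filter.atTop (nhds (y k))) ∧
      (∀ k, dist (y k) (y (k + 1)) ≤ (2 : ℝ)⁻¹ ^ k) ∧
      CauchySeq y ∧
      (∀ k, dist (y k) (x k) ≤ 2 * (2 : ℝ)⁻¹ ^ k) ∧
      ∃ l, Filter.Tendsto x Filter.atTop (nhds l) := by
  have hex : ∀ k, ∃ l, Tendsto (fun j => iterWedge R.wedge x k j) atTop (nhds l) := fun k =>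
    hdec _ (RooftopAux.cauchy_iter R x hd k) (fun j => RooftopAux.decreasing R x k j)
  choose y hy using hex
  have h1 : ∀ k, Tendsto (fun j => iterWedge R.wedge x k (j + 1)) atTop (nhds (y k)) :=
    fun k => (hy k).comp (tendsto_add_atTop_nat 1)
  have hstep : ∀ k, dist (y k) (y (k + 1)) ≤ (2 : ℝ)⁻¹ ^ k := by
    intro k
    have hdist : Tendsto
        (fun j => dist (iterWedge R.wedge x k (j + 1)) (iterWedge R.wedge x (k + 1) j))
        atTop (nhds (dist (y k) (y (k + 1)))) := (h1 k).dist (hy (k + 1))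
    refine le_of_tendsto hdist (Filter.Eventually.of_forall fun j => ?_)
    rw [RooftopAux.shift R x k j]
    nth_rewrite 2 [(RooftopAux.absorb_first R x (k + 1) j).symm]
    exact (R.dist_wedge_le (x k) (x (k + 1)) _).trans (hd k)
  have hcy : CauchySeq y :=
    cauchySeq_of_le_geometric (2 : ℝ)⁻¹ 1 (by norm_num) (fun n => by simpa using hstep n)
  have hyx : ∀ k, dist (y k) (x k) ≤ 2 * (2 : ℝ)⁻¹ ^ k := by
    intro k
    refine le_of_tendsto ((hy k).dist tendsto_const_nhds)
      (Filter.Eventually.of_forall fun j => ?_)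
    rw [dist_comm]
    exact RooftopAux.dist_head R x hd k j
  have hmono : ∀ k, R.wedge (y k) (y (k + 1)) = y k := by
    intro k
    have ht : Tendsto (fun j => R.wedge (iterWedge R.wedge x k (j + 1))
        (iterWedge R.wedge x (k + 1) j)) atTop (nhds (R.wedge (y k) (y (k + 1)))) :=
      RooftopAux.wedge_tendsto R (h1 k) (hy (k + 1))
    have heq : ∀ j, R.wedge (iterWedge R.wedge x k (j + 1)) (iterWedge R.wedge x (k + 1) j)
        = iterWedge R.wedge x k (j + 1) := by
      intro j
      rw [RooftopAux.shift R x k j, R.assoc, R.idem]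
    exact tendsto_nhds_unique (ht.congr heq) (h1 k)
  obtain ⟨l, hl⟩ := hinc y hcy hmono
  refine ⟨y, hy, hstep, hcy, hyx, l, ?_⟩
  have hz : Tendsto (fun k => dist (y k) (x k)) atTop (nhds 0) := by
    refine squeeze_zero (fun k => dist_nonneg) hyx ?_
    have : Tendsto (fun k : ℕ => (2 : ℝ)⁻¹ ^ k) atTop (nhds 0) :=
      tendsto_pow_atTop_nhds_zero_of_lt_one (by norm_num) (by norm_num)
    simpa using this.const_mul 2
  exact hl.congr_dist hz
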